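/- arXiv:1710.10543 — 3 statements merged into one kernel-verified Lean document; each statement's English description precedes it below -/
import Mathlib

section
/- Consistency (Galerkin orthogonality) of the dG(q) method (Lemma 2.1): let f : J → V* (the continuous dual of V) be such that t ↦ f(t)(v_τ(t)) is integrable on J for every v_τ ∈ S_τ, and let u₀ ∈ H. Suppose u ∈ C¹([0,T]; V) satisfies u(0) = u₀ (as elements of H) and (u'(t), v)_H + a(t; u(t), v) = f(t)(v) for all v ∈ V and a.e. t ∈ J, and suppose u_τ ∈ S_τ satisfies B_τ(u_τ, v_τ) = Σ_{n=0}^{N−1} ∫_{J_n} f(t)(v_τ(t)) dt + (u₀, v_τ^{0,+})_H for all v_τ ∈ S_τ. Then B_τ(u − u_τ, v_τ) = 0 for all v_τ ∈ S_τ. -/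
open MeasureTheory Filter

noncomputable section

universe u w

variable {V : Type u} [NormedAddCommGroup V] [InnerProductSpace ℝ V]
variable {H : Type w} [NormedAddCommGroup H] [InnerProductSpace ℝ H]

/-- The norm `‖v‖_{V'} = sup {(v,φ)_H/‖φ‖_V : φ ∈ V, φ ≠ 0}`. -/
def dualNorm (ι : V →L[ℝ] H) (w : V) : ℝ :=
  sSup ((fun φ : V => (inner ℝ (ι w) (ι φ) : ℝ) / ‖φ‖) '' {φ : V | φ ≠ 0})

/-- Right limit `v^{n,+}` of a function at a point. -/
def rlim (w : ℝ → V) (x : ℝ) : V :=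
  letI : Nonempty V := ⟨0⟩
  limUnder (nhdsWithin x (Set.Ioi x)) w

/-- Membership in `S_τ`: `w` coincides on each `J_n = (t_n, t_{n+1}]` with a `V`-valued
polynomial of degree ≤ q. -/
def MemS (N q : ℕ) (t : ℕ → ℝ) (w : ℝ → V) : Prop :=
  ∀ n < N, ∃ c : Fin (q + 1) → V,
    ∀ x ∈ Set.Ioc (t n) (t (n + 1)), w x = ∑ j : Fin (q + 1), x ^ (j : ℕ) • c j

/-- The DG bilinear form `B_τ`. -/
def dgB (ι : V →L[ℝ] H) (N : ℕ) (t : ℕ → ℝ) (a : ℝ → V →ₗ[ℝ] V →ₗ[ℝ] ℝ)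
    (w v : ℝ → V) : ℝ :=
  (∑ n ∈ Finset.range N, ∫ s in Set.Ioc (t n) (t (n + 1)),
      ((inner ℝ (ι (deriv w s)) (ι (v s)) : ℝ) + a s (w s) (v s)))
    + (inner ℝ (ι (rlim w (t 0))) (ι (rlim v (t 0))) : ℝ)
    + ∑ n ∈ Finset.Ico 1 N, (inner ℝ (ι (rlim w (t n) - w (t n))) (ι (rlim v (t n))) : ℝ)

/-- `‖v‖_{X,τ}`. -/
def dgNormX (ι : V →L[ℝ] H) (N : ℕ) (t : ℕ → ℝ) (v : ℝ → V) : ℝ :=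
  Real.sqrt ((∑ n ∈ Finset.range N, ∫ s in Set.Ioc (t n) (t (n + 1)),
      (dualNorm ι (deriv v s) ^ 2 + ‖v s‖ ^ 2))
    + ‖ι (rlim v (t 0))‖ ^ 2
    + ∑ n ∈ Finset.Ico 1 N, ‖ι (rlim v (t n) - v (t n))‖ ^ 2)

/-- `‖v‖_{X,τ,*}` (jump weights `τ_n⁻¹`). -/
def dgNormXs (ι : V →L[ℝ] H) (N : ℕ) (t : ℕ → ℝ) (v : ℝ → V) : ℝ :=
  Real.sqrt ((∑ n ∈ Finset.range N, ∫ s in Set.Ioc (t n) (t (n + 1)),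
      (dualNorm ι (deriv v s) ^ 2 + ‖v s‖ ^ 2))
    + ‖ι (rlim v (t 0))‖ ^ 2
    + ∑ n ∈ Finset.Ico 1 N, (t (n + 1) - t n)⁻¹ * ‖ι (rlim v (t n) - v (t n))‖ ^ 2)

/-- `‖v‖_{X*,τ}` (with `‖v^N‖` in place of `‖v^{0,+}‖`). -/
def dgNormXd (ι : V →L[ℝ] H) (N : ℕ) (t : ℕ → ℝ) (v : ℝ → V) : ℝ :=
  Real.sqrt ((∑ n ∈ Finset.range N, ∫ s in Set.Ioc (t n) (t (n + 1)),
      (dualNorm ι (deriv v s) ^ 2 + ‖v s‖ ^ 2))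
    + ‖ι (v (t N))‖ ^ 2
    + ∑ n ∈ Finset.Ico 1 N, ‖ι (rlim v (t n) - v (t n))‖ ^ 2)

/-- `‖v‖_{Y,τ}`. -/
def dgNormY (ι : V →L[ℝ] H) (N : ℕ) (t : ℕ → ℝ) (v : ℝ → V) : ℝ :=
  Real.sqrt ((∑ n ∈ Finset.range N, ∫ s in Set.Ioc (t n) (t (n + 1)), ‖v s‖ ^ 2)
    + ‖ι (rlim v (t 0))‖ ^ 2
    + ∑ n ∈ Finset.Ico 1 N, ‖ι (rlim v (t n))‖ ^ 2)

/-- `‖v‖_{Y,τ,#}` (weights `τ_n`). -/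
def dgNormYs (ι : V →L[ℝ] H) (N : ℕ) (t : ℕ → ℝ) (v : ℝ → V) : ℝ :=
  Real.sqrt ((∑ n ∈ Finset.range N, ∫ s in Set.Ioc (t n) (t (n + 1)), ‖v s‖ ^ 2)
    + ‖ι (rlim v (t 0))‖ ^ 2
    + ∑ n ∈ Finset.Ico 1 N, (t (n + 1) - t n) * ‖ι (rlim v (t n))‖ ^ 2)

/-- `‖v‖_{Y*,τ}`. -/
def dgNormYd (ι : V →L[ℝ] H) (N : ℕ) (t : ℕ → ℝ) (v : ℝ → V) : ℝ :=
  Real.sqrt ((∑ n ∈ Finset.range N, ∫ s in Set.Ioc (t n) (t (n + 1)), ‖v s‖ ^ 2)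
    + ‖ι (v (t N))‖ ^ 2
    + ∑ n ∈ Finset.Ico 1 N, ‖ι (rlim v (t n))‖ ^ 2)

/-- `‖v‖_{Y*,τ,#}`. -/
def dgNormYds (ι : V →L[ℝ] H) (N : ℕ) (t : ℕ → ℝ) (v : ℝ → V) : ℝ :=
  Real.sqrt ((∑ n ∈ Finset.range N, ∫ s in Set.Ioc (t n) (t (n + 1)), ‖v s‖ ^ 2)
    + ‖ι (v (t N))‖ ^ 2
    + ∑ n ∈ Finset.Ico 1 N, (t (n + 1) - t n) * ‖ι (rlim v (t n))‖ ^ 2)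

end

open Set Topology

/-!
Since `u` is continuous, it has no jumps and its right limit at `t₀` is `u₀`; integrating the
equation for `u` against `v_τ` over each `J_n` therefore gives
`B_τ(u, v_τ) = ∑ ∫_{J_n} f(v_τ) + (u₀, v_τ^{0,+})`, the right-hand side of the dG(q) equation.
`B_τ(·, v_τ)` is additive on functions that are differentiable inside each `J_n`, have right
limits at the nodes and integrable integrands; `u` is such a function, and so is `u_τ`, being a
polynomial on each `J_n` (integrability of `a(t; u_τ, v_τ)` uses the bound `M`). Subtracting the
two identities gives `B_τ(u − u_τ, v_τ) = 0`.
-/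

section Polynomial

variable {V : Type*}

def vecPoly [AddCommMonoid V] [Module ℝ V] {m : ℕ} (c : Fin m → V) (x : ℝ) : V :=
  ∑ j : Fin m, x ^ (j : ℕ) • c j

theorem contDiff_vecPoly [NormedAddCommGroup V] [NormedSpace ℝ V] {m : ℕ} (c : Fin m → V) :
    ContDiff ℝ ⊤ (vecPoly c) :=
  ContDiff.sum fun _ _ => (contDiff_id.pow _).smul contDiff_const

-- `s ↦ a s w v` is only known to be measurable for fixed `w, v`, hence the expansion into
-- coefficients.
theorem measurable_bilin_vecPoly [AddCommGroup V] [Module ℝ V]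
    {a : ℝ → V →ₗ[ℝ] V →ₗ[ℝ] ℝ} (hmeas : ∀ w v : V, Measurable fun s => a s w v)
    {m : ℕ} (c d : Fin m → V) :
    Measurable fun s => a s (vecPoly c s) (vecPoly d s) := by
  simp only [vecPoly, map_sum, LinearMap.sum_apply, LinearMap.map_smul, LinearMap.smul_apply,
    smul_eq_mul]
  fun_prop

theorem integrableOn_bilin_vecPoly [NormedAddCommGroup V] [NormedSpace ℝ V]
    {a : ℝ → V →ₗ[ℝ] V →ₗ[ℝ] ℝ} (hmeas : ∀ w v : V, Measurable fun s => a s w v)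
    {M x y : ℝ} (hbnd : ∀ᵐ s ∂volume.restrict (Ioc x y), ∀ w v : V, |a s w v| ≤ M * ‖w‖ * ‖v‖)
    {m : ℕ} (c d : Fin m → V) :
    IntegrableOn (fun s => a s (vecPoly c s) (vecPoly d s)) (Ioc x y) := by
  obtain ⟨Kc, hKc⟩ := (isCompact_Icc (a := x) (b := y)).exists_bound_of_continuousOn
    (contDiff_vecPoly c).continuous.continuousOn
  obtain ⟨Kd, hKd⟩ := (isCompact_Icc (a := x) (b := y)).exists_bound_of_continuousOn
    (contDiff_vecPoly d).continuous.continuousOn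
  refine Integrable.mono' (g := fun _ => |M| * Kc * Kd) (integrableOn_const measure_Ioc_lt_top.ne)
    (measurable_bilin_vecPoly hmeas c d).aestronglyMeasurable ?_
  filter_upwards [hbnd, ae_restrict_mem measurableSet_Ioc] with s hs hsJ
  have hc := hKc s (Ioc_subset_Icc_self hsJ)
  have hd := hKd s (Ioc_subset_Icc_self hsJ)
  have hKc0 : 0 ≤ Kc := (norm_nonneg _).trans hc
  calc ‖a s (vecPoly c s) (vecPoly d s)‖ ≤ M * ‖vecPoly c s‖ * ‖vecPoly d s‖ := hs _ _
    _ ≤ |M| * ‖vecPoly c s‖ * ‖vecPoly d s‖ := by gcongr; exact le_abs_self M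
    _ ≤ |M| * Kc * Kd := by gcongr

end Polynomial

theorem Filter.Tendsto.rlim_eq {V : Type*} [NormedAddCommGroup V] [InnerProductSpace ℝ V]
    {w : ℝ → V} {x : ℝ} {L : V} (h : Tendsto w (𝓝[>] x) (𝓝 L)) : rlim w x = L :=
  h.limUnder_eq

theorem apply_zero_le_and_apply_succ_le {N : ℕ} {t : ℕ → ℝ}
    (hmono : ∀ n < N, t n < t (n + 1)) {n : ℕ} (hn : n < N) : t 0 ≤ t n ∧ t (n + 1) ≤ t N := by
  have h := (strictMonoOn_Iic_of_lt_succ (n := N) (ψ := t) fun m hm => hmono m hm).monotoneOn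
  exact ⟨h (by simp) (by simp; omega) (Nat.zero_le n), h (by simpa using hn) (by simp) hn⟩

theorem ContinuousOn.continuousWithinAt_Ioi_of_mem_Ico {V : Type*} [TopologicalSpace V]
    {u : ℝ → V} {x y z : ℝ} (hu : ContinuousOn u (Icc x y)) (hz : z ∈ Ico x y) :
    ContinuousWithinAt u (Ioi z) z :=
  (hu.continuousWithinAt (Ico_subset_Icc_self hz)).mono_of_mem_nhdsWithin
    (Icc_mem_nhdsGT_of_mem hz)

theorem ContDiffOn.differentiableAt_of_mem_Ioo {V : Type*} [NormedAddCommGroup V]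
    [NormedSpace ℝ V] {u : ℝ → V} {x y s : ℝ} (hu : ContDiffOn ℝ 1 u (Icc x y))
    (hs : s ∈ Ioo x y) : DifferentiableAt ℝ u s :=
  (hu.differentiableOn one_ne_zero).differentiableAt (Icc_mem_nhds hs.1 hs.2)

theorem ae_mem_Ioo_restrict_Ioc {μ : Measure ℝ} [NullSingletonClass μ] (x y : ℝ) :
    ∀ᵐ s ∂μ.restrict (Ioc x y), s ∈ Ioo x y := by
  rw [← Measure.restrict_congr_set Ioo_ae_eq_Ioc]
  exact ae_restrict_mem measurableSet_Ioo

theorem ae_restrict_Ioc_of_ae_restrict_Ioo {μ : Measure ℝ} [NullSingletonClass μ]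
    {p : ℝ → Prop} {x y x' y' : ℝ} (h : ∀ᵐ s ∂μ.restrict (Ioo x y), p s) (hx : x ≤ x')
    (hy : y' ≤ y) : ∀ᵐ s ∂μ.restrict (Ioc x' y'), p s := by
  rw [Measure.restrict_congr_set Ioo_ae_eq_Ioc] at h
  exact ae_restrict_of_ae_restrict_of_subset (Ioc_subset_Ioc hx hy) h

section DG

variable {V : Type*} [NormedAddCommGroup V] [InnerProductSpace ℝ V]
  {H : Type*} [NormedAddCommGroup H] [InnerProductSpace ℝ H]
  (ι : V →L[ℝ] H) (a : ℝ → V →ₗ[ℝ] V →ₗ[ℝ] ℝ) {N q : ℕ} {t : ℕ → ℝ}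

noncomputable def dgIntegrand (w v : ℝ → V) (s : ℝ) : ℝ :=
  (inner ℝ (ι (deriv w s)) (ι (v s)) : ℝ) + a s (w s) (v s)

theorem dgB_def (w v : ℝ → V) :
    dgB ι N t a w v =
      (∑ n ∈ Finset.range N, ∫ s in Ioc (t n) (t (n + 1)), dgIntegrand ι a w v s)
        + (inner ℝ (ι (rlim w (t 0))) (ι (rlim v (t 0))) : ℝ)
        + ∑ n ∈ Finset.Ico 1 N,
            (inner ℝ (ι (rlim w (t n) - w (t n))) (ι (rlim v (t n))) : ℝ) :=
  rfl

namespace MemS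

variable {w v : ℝ → V} {n : ℕ}

theorem tendsto_rlim (hw : MemS N q t w) (hn : n < N) (ht : t n < t (n + 1)) :
    Tendsto w (𝓝[>] t n) (𝓝 (rlim w (t n))) := by
  obtain ⟨c, hc⟩ := hw n hn
  have hpoly : Tendsto w (𝓝[>] t n) (𝓝 (vecPoly c (t n))) :=
    (((contDiff_vecPoly c).continuous.tendsto (t n)).mono_left nhdsWithin_le_nhds).congr'
      (eventuallyEq_of_mem (Ioc_mem_nhdsGT ht) hc).symm
  rwa [hpoly.rlim_eq]

theorem differentiableAt (hw : MemS N q t w) (hn : n < N) {s : ℝ}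
    (hs : s ∈ Ioo (t n) (t (n + 1))) : DifferentiableAt ℝ w s := by
  obtain ⟨c, hc⟩ := hw n hn
  have hev : w =ᶠ[𝓝 s] vecPoly c :=
    eventuallyEq_of_mem (isOpen_Ioo.mem_nhds hs) fun x hx => hc x (Ioo_subset_Ioc_self hx)
  exact hev.differentiableAt_iff.mpr ((contDiff_vecPoly c).differentiable (by simp) s)

theorem integrableOn_dgIntegrand (hw : MemS N q t w) (hv : MemS N q t v)
    (hmeas : ∀ w₀ v₀ : V, Measurable fun s => a s w₀ v₀) {M : ℝ}
    (hbnd : ∀ᵐ s ∂volume.restrict (Ioc (t n) (t (n + 1))),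
      ∀ w₀ v₀ : V, |a s w₀ v₀| ≤ M * ‖w₀‖ * ‖v₀‖)
    (hn : n < N) : IntegrableOn (dgIntegrand ι a w v) (Ioc (t n) (t (n + 1))) := by
  obtain ⟨c, hc⟩ := hw n hn
  obtain ⟨d, hd⟩ := hv n hn
  have hinner : Continuous fun s => (inner ℝ (ι (deriv (vecPoly c) s)) (ι (vecPoly d s)) : ℝ) :=
    (ι.continuous.comp ((contDiff_vecPoly c).continuous_deriv le_top)).inner
      (ι.continuous.comp (contDiff_vecPoly d).continuous)
  have hpoly : IntegrableOn (dgIntegrand ι a (vecPoly c) (vecPoly d)) (Ioc (t n) (t (n + 1))) :=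
    hinner.integrableOn_Ioc.add (integrableOn_bilin_vecPoly hmeas hbnd c d)
  refine hpoly.congr_fun_ae ?_
  filter_upwards [ae_mem_Ioo_restrict_Ioc _ _] with s hs
  have hev : w =ᶠ[𝓝 s] vecPoly c :=
    eventuallyEq_of_mem (isOpen_Ioo.mem_nhds hs) fun x hx => hc x (Ioo_subset_Ioc_self hx)
  simp only [dgIntegrand, hev.deriv_eq, hc s (Ioo_subset_Ioc_self hs),
    hd s (Ioo_subset_Ioc_self hs), vecPoly]

end MemS

theorem dgB_sub {w₁ w₂ v : ℝ → V} (hN : 1 ≤ N)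
    (hd₁ : ∀ n < N, ∀ s ∈ Ioo (t n) (t (n + 1)), DifferentiableAt ℝ w₁ s)
    (hd₂ : ∀ n < N, ∀ s ∈ Ioo (t n) (t (n + 1)), DifferentiableAt ℝ w₂ s)
    (hi₁ : ∀ n < N, IntegrableOn (dgIntegrand ι a w₁ v) (Ioc (t n) (t (n + 1))))
    (hi₂ : ∀ n < N, IntegrableOn (dgIntegrand ι a w₂ v) (Ioc (t n) (t (n + 1))))
    (hl₁ : ∀ n < N, ∃ L, Tendsto w₁ (𝓝[>] t n) (𝓝 L))
    (hl₂ : ∀ n < N, ∃ L, Tendsto w₂ (𝓝[>] t n) (𝓝 L)) :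
    dgB ι N t a (fun s => w₁ s - w₂ s) v = dgB ι N t a w₁ v - dgB ι N t a w₂ v := by
  have hint : ∀ n ∈ Finset.range N,
      ∫ s in Ioc (t n) (t (n + 1)), dgIntegrand ι a (fun s => w₁ s - w₂ s) v s =
        (∫ s in Ioc (t n) (t (n + 1)), dgIntegrand ι a w₁ v s)
          - ∫ s in Ioc (t n) (t (n + 1)), dgIntegrand ι a w₂ v s := by
    intro n hn
    rw [Finset.mem_range] at hn
    rw [← integral_sub (hi₁ n hn) (hi₂ n hn)]
    refine integral_congr_ae ?_
    filter_upwards [ae_mem_Ioo_restrict_Ioc _ _] with s hs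
    have hderiv : deriv (fun s => w₁ s - w₂ s) s = deriv w₁ s - deriv w₂ s :=
      deriv_sub (hd₁ n hn s hs) (hd₂ n hn s hs)
    simp only [dgIntegrand, hderiv, map_sub, inner_sub_left, LinearMap.sub_apply]
    ring
  have hrlim : ∀ n < N, rlim (fun s => w₁ s - w₂ s) (t n) = rlim w₁ (t n) - rlim w₂ (t n) :=
    fun n hn => by
      obtain ⟨⟨L₁, h₁⟩, ⟨L₂, h₂⟩⟩ := And.intro (hl₁ n hn) (hl₂ n hn)
      rw [h₁.rlim_eq, h₂.rlim_eq, (h₁.sub h₂).rlim_eq]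
  have hjump : ∀ n ∈ Finset.Ico 1 N,
      (inner ℝ (ι (rlim (fun s => w₁ s - w₂ s) (t n) - (w₁ (t n) - w₂ (t n))))
        (ι (rlim v (t n))) : ℝ) =
        (inner ℝ (ι (rlim w₁ (t n) - w₁ (t n))) (ι (rlim v (t n))) : ℝ)
          - inner ℝ (ι (rlim w₂ (t n) - w₂ (t n))) (ι (rlim v (t n))) := by
    intro n hn
    rw [hrlim n (Finset.mem_Ico.mp hn).2, ← inner_sub_left, ← map_sub, sub_sub_sub_comm]
  rw [dgB_def, dgB_def, dgB_def, Finset.sum_congr rfl hint, Finset.sum_congr rfl hjump, hrlim 0 hN,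
    Finset.sum_sub_distrib, Finset.sum_sub_distrib, map_sub, inner_sub_left]
  ring

theorem dgB_eq_of_continuousWithinAt {w v : ℝ → V} (hN : 1 ≤ N)
    (hw : ∀ n < N, ContinuousWithinAt w (Ioi (t n)) (t n)) :
    dgB ι N t a w v =
      (∑ n ∈ Finset.range N, ∫ s in Ioc (t n) (t (n + 1)), dgIntegrand ι a w v s)
        + (inner ℝ (ι (w (t 0))) (ι (rlim v (t 0))) : ℝ) := by
  have hrlim : ∀ n < N, rlim w (t n) = w (t n) := fun n hn => Tendsto.rlim_eq (hw n hn)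
  have hjump : ∀ n ∈ Finset.Ico 1 N,
      (inner ℝ (ι (rlim w (t n) - w (t n))) (ι (rlim v (t n))) : ℝ) = 0 := fun n hn => by
    rw [hrlim n (Finset.mem_Ico.mp hn).2, sub_self, map_zero, inner_zero_left]
  rw [dgB_def, Finset.sum_eq_zero hjump, hrlim 0 hN, add_zero]

end DG

theorem dg_consistency_general
    {V : Type u} [NormedAddCommGroup V] [InnerProductSpace ℝ V]
    {H : Type w} [NormedAddCommGroup H] [InnerProductSpace ℝ H]
    (ι : V →L[ℝ] H)
    (T : ℝ) (N : ℕ) (hN : 1 ≤ N)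
    (t : ℕ → ℝ) (ht0 : t 0 = 0) (htN : t N = T)
    (hmono : ∀ n < N, t n < t (n + 1))
    (q : ℕ) (M α : ℝ)
    (a : ℝ → V →ₗ[ℝ] V →ₗ[ℝ] ℝ)
    (hmeas : ∀ w₀ v₀ : V, Measurable fun s => a s w₀ v₀)
    (hbnd : ∀ᵐ s ∂(volume.restrict (Set.Ioo (0 : ℝ) T)),
      (∀ w₀ v₀ : V, |a s w₀ v₀| ≤ M * ‖w₀‖ * ‖v₀‖) ∧
      (∀ v₀ : V, α * ‖v₀‖ ^ 2 ≤ a s v₀ v₀))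
    (f : ℝ → (V →L[ℝ] ℝ))
    (hfint : ∀ vτ : ℝ → V, MemS N q t vτ →
      MeasureTheory.IntegrableOn (fun s => f s (vτ s)) (Set.Ioc (0 : ℝ) T))
    (u₀ : H)
    -- `u` solves the evolution equation with data `f`, `u₀`
    (u : ℝ → V) (hu : ContDiffOn ℝ 1 u (Set.Icc 0 T)) (hu0 : ι (u 0) = u₀)
    (hueq : ∀ᵐ s ∂(volume.restrict (Set.Ioo (0 : ℝ) T)),
      ∀ v : V, (inner ℝ (ι (deriv u s)) (ι v) : ℝ) + a s (u s) v = f s v)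
    -- `uτ` is a dG(q) solution
    (uτ : ℝ → V) (huτ : MemS N q t uτ)
    (huτeq : ∀ vτ : ℝ → V, MemS N q t vτ →
      dgB ι N t a uτ vτ =
        (∑ n ∈ Finset.range N, ∫ s in Set.Ioc (t n) (t (n + 1)), f s (vτ s))
          + (inner ℝ u₀ (ι (rlim vτ (t 0))) : ℝ)) :
    ∀ vτ : ℝ → V, MemS N q t vτ → dgB ι N t a (fun s => u s - uτ s) vτ = 0 := by
  intro vτ hvτ
  have ht : ∀ n < N, 0 ≤ t n ∧ t (n + 1) ≤ T := fun n hn =>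
    ht0 ▸ htN ▸ apply_zero_le_and_apply_succ_le hmono hn
  have hu_cont (n : ℕ) (hn : n < N) : ContinuousWithinAt u (Ioi (t n)) (t n) :=
    hu.continuousOn.continuousWithinAt_Ioi_of_mem_Ico
      ⟨(ht n hn).1, (hmono n hn).trans_le (ht n hn).2⟩
  have hu_diff (n : ℕ) (hn : n < N) (s : ℝ) (hs : s ∈ Ioo (t n) (t (n + 1))) :
      DifferentiableAt ℝ u s :=
    hu.differentiableAt_of_mem_Ioo ⟨(ht n hn).1.trans_lt hs.1, hs.2.trans_le (ht n hn).2⟩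
  have hu_integrand (n : ℕ) (hn : n < N) :
      dgIntegrand ι a u vτ =ᵐ[volume.restrict (Ioc (t n) (t (n + 1)))] fun s => f s (vτ s) := by
    filter_upwards [ae_restrict_Ioc_of_ae_restrict_Ioo hueq (ht n hn).1 (ht n hn).2] with s hs
    exact hs (vτ s)
  have hu_dgB : dgB ι N t a u vτ =
      (∑ n ∈ Finset.range N, ∫ s in Ioc (t n) (t (n + 1)), f s (vτ s))
        + (inner ℝ u₀ (ι (rlim vτ (t 0))) : ℝ) := by
    rw [dgB_eq_of_continuousWithinAt ι a hN hu_cont, ht0, hu0]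
    congr 1
    exact Finset.sum_congr rfl fun n hn =>
      integral_congr_ae (hu_integrand n (Finset.mem_range.mp hn))
  have hbnd_J (n : ℕ) (hn : n < N) := ae_restrict_Ioc_of_ae_restrict_Ioo
    (hbnd.mono fun _ h => h.1) (ht n hn).1 (ht n hn).2
  rw [dgB_sub ι a hN hu_diff (fun n hn _ => huτ.differentiableAt hn)
    (fun n hn => ((hfint vτ hvτ).mono_set (Ioc_subset_Ioc (ht n hn).1 (ht n hn).2)).congr_fun_ae
      (hu_integrand n hn).symm)
    (fun n hn => huτ.integrableOn_dgIntegrand ι a hvτ hmeas (hbnd_J n hn) hn)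
    (fun n hn => ⟨_, hu_cont n hn⟩) (fun n hn => ⟨_, huτ.tendsto_rlim hn (hmono n hn)⟩),
    hu_dgB, huτeq vτ hvτ, sub_self]

/-- **Lemma 2.1 (consistency / Galerkin orthogonality of the dG(q) method).** -/
theorem dg_consistency
    {V : Type u} [NormedAddCommGroup V] [InnerProductSpace ℝ V] [CompleteSpace V]
    {H : Type w} [NormedAddCommGroup H] [InnerProductSpace ℝ H] [CompleteSpace H]
    (ι : V →L[ℝ] H) (hinj : Function.Injective ι) (hdense : DenseRange ι)
    (T : ℝ) (hT : 0 < T) (N : ℕ) (hN : 1 ≤ N)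
    (t : ℕ → ℝ) (ht0 : t 0 = 0) (htN : t N = T)
    (hmono : ∀ n < N, t n < t (n + 1)) (hτ : ∀ n < N, t (n + 1) - t n ≤ 1)
    (q : ℕ) (M α : ℝ) (hα : 0 < α) (hαM : α ≤ M)
    (a : ℝ → V →ₗ[ℝ] V →ₗ[ℝ] ℝ)
    (hmeas : ∀ w₀ v₀ : V, Measurable fun s => a s w₀ v₀)
    (hbnd : ∀ᵐ s ∂(volume.restrict (Set.Ioo (0 : ℝ) T)),
      (∀ w₀ v₀ : V, |a s w₀ v₀| ≤ M * ‖w₀‖ * ‖v₀‖) ∧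
      (∀ v₀ : V, α * ‖v₀‖ ^ 2 ≤ a s v₀ v₀))
    (f : ℝ → (V →L[ℝ] ℝ))
    (hfint : ∀ vτ : ℝ → V, MemS N q t vτ →
      MeasureTheory.IntegrableOn (fun s => f s (vτ s)) (Set.Ioc (0 : ℝ) T))
    (u₀ : H)
    -- `u` solves the evolution equation with data `f`, `u₀`
    (u : ℝ → V) (hu : ContDiffOn ℝ 1 u (Set.Icc 0 T)) (hu0 : ι (u 0) = u₀)
    (hueq : ∀ᵐ s ∂(volume.restrict (Set.Ioo (0 : ℝ) T)),
      ∀ v : V, (inner ℝ (ι (deriv u s)) (ι v) : ℝ) + a s (u s) v = f s v)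
    -- `uτ` is a dG(q) solution
    (uτ : ℝ → V) (huτ : MemS N q t uτ)
    (huτeq : ∀ vτ : ℝ → V, MemS N q t vτ →
      dgB ι N t a uτ vτ =
        (∑ n ∈ Finset.range N, ∫ s in Set.Ioc (t n) (t (n + 1)), f s (vτ s))
          + (inner ℝ u₀ (ι (rlim vτ (t 0))) : ℝ)) :
    ∀ vτ : ℝ → V, MemS N q t vτ → dgB ι N t a (fun s => u s - uτ s) vτ = 0 :=
  dg_consistency_general ι T N hN t ht0 htN hmono q M α a hmeas hbnd f hfint u₀ u hu hu0 hueq uτ huτ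
    huτeq
end

section
/- L² stability of the projection π_n (Lemma 3.1, estimate (3.2b)): there exists a constant C_q > 0 depending only on q (independent of V, H, n and τ_n) such that ‖π_n v‖_{L²(J_n;U)} ≤ C_q ‖v‖_{L²(J_n;U)} for every v ∈ L²(J_n; V), both for U = V and for U = H. -/
/-!
The projection is characterised by finitely many linear conditions, so the estimate is finite
dimensional. On `J = (a, b]` write `π v = ∑ₖ φₖ₊₁ • wₖ` with the rescaled monomials
`φₙ(x) = ((x - a)/(b - a))ⁿ`, which is possible because `π v (a) = 0`. Testing against `φₗ`,
`l < q`, the moment conditions become the linear system `(b - a) • ∑ₖ Mₗₖ • wₖ = ∫_J φₗ • v`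
with the shifted Hilbert matrix `Mₗₖ = 1/(l + k + 2) = ∫₀¹ sˡ⁺ᵏ⁺¹ ds`, which is invertible
because `bᵀ M b = ∫₀¹ s Q(s)² ds` for the polynomial `Q` with coefficients `b`. Since `|φₙ| ≤ 1`
on `J`, Cauchy–Schwarz bounds the right-hand sides by `√(b - a) ‖v‖`, and the coefficients `wₖ`,
hence `π v`, inherit the bound with a constant built from `M⁻¹` alone. The bound in `H` is the
same statement applied to `ι ∘ v`, whose projection is `ι ∘ π v`.
-/

open MeasureTheory Set Polynomial Matrix

noncomputable def shiftedHilbertMatrix (q : ℕ) : Matrix (Fin q) (Fin q) ℝ :=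
  Matrix.of fun l k => ((l : ℝ) + k + 2)⁻¹

theorem Polynomial.eval_ofFn {R : Type*} [Semiring R] [DecidableEq R] {n : ℕ}
    (b : Fin n → R) (s : R) : (ofFn n b).eval s = ∑ k, b k * s ^ (k : ℕ) := by
  simp [ofFn_eq_sum_monomial, eval_finsetSum]

theorem dotProduct_shiftedHilbertMatrix_mulVec {q : ℕ} (b : Fin q → ℝ) :
    b ⬝ᵥ (shiftedHilbertMatrix q *ᵥ b) = ∫ s in (0 : ℝ)..1, s * (ofFn q b).eval s ^ 2 := by
  have hexpand : ∀ s : ℝ, s * (ofFn q b).eval s ^ 2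
      = ∑ l : Fin q, ∑ k : Fin q, b l * b k * s ^ ((l : ℕ) + k + 1) := by
    intro s
    rw [eval_ofFn, sq, Finset.sum_mul_sum, Finset.mul_sum]
    refine Finset.sum_congr rfl fun l _ => ?_
    rw [Finset.mul_sum]
    exact Finset.sum_congr rfl fun k _ => by ring
  simp_rw [hexpand]
  rw [intervalIntegral.integral_finsetSum fun l _ =>
    (by fun_prop : Continuous _).intervalIntegrable _ _]
  refine Finset.sum_congr rfl fun l _ => ?_
  rw [intervalIntegral.integral_finsetSum fun k _ =>
    (by fun_prop : Continuous _).intervalIntegrable _ _, mulVec, dotProduct, Finset.mul_sum]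
  refine Finset.sum_congr rfl fun k _ => ?_
  simp [shiftedHilbertMatrix, integral_pow]
  ring

theorem shiftedHilbertMatrix_det_ne_zero (q : ℕ) : (shiftedHilbertMatrix q).det ≠ 0 := by
  rw [Ne, ← exists_mulVec_eq_zero_iff]
  rintro ⟨b, hb0, hb⟩
  have hQ : ofFn q b ≠ 0 := fun h => hb0 (injective_ofFn q (h.trans (ofFn_zero q).symm))
  obtain ⟨c, hc, hQc⟩ :=
    (Ioo_infinite (zero_lt_one' ℝ)).exists_notMem_finset (ofFn q b).roots.toFinset
  have hQc' : (ofFn q b).eval c ≠ 0 := by simpa [hQ] using hQc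
  have hpos := intervalIntegral.integral_pos (f := fun s => s * (ofFn q b).eval s ^ 2)
    (zero_lt_one' ℝ) (by fun_prop) (fun s hs => mul_nonneg hs.1.le (sq_nonneg _))
    ⟨c, Ioo_subset_Icc_self hc, mul_pos hc.1 (by positivity)⟩
  rw [← dotProduct_shiftedHilbertMatrix_mulVec, hb, dotProduct_zero] at hpos
  exact hpos.false

noncomputable def stabilityConstant (q : ℕ) : ℝ :=
  ∑ k, ∑ l, |(shiftedHilbertMatrix q)⁻¹ k l| + 1

theorem stabilityConstant_pos (q : ℕ) : 0 < stabilityConstant q := by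
  unfold stabilityConstant
  positivity

theorem Matrix.norm_le_of_sum_smul_eq {ι E : Type*} [Fintype ι] [DecidableEq ι]
    [SeminormedAddCommGroup E] [NormedSpace ℝ E] {M N : Matrix ι ι ℝ} (hNM : N * M = 1)
    {w u : ι → E} (hwu : ∀ l, ∑ k, M l k • w k = u l) {R : ℝ} (hu : ∀ l, ‖u l‖ ≤ R) (k : ι) :
    ‖w k‖ ≤ (∑ l, |N k l|) * R := by
  have hw : w k = ∑ l, N k l • u l := calc
    w k = ∑ i, (N * M) k i • w i := by rw [hNM]; simp [one_apply]
    _ = ∑ l, N k l • u l := by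
      simp_rw [← hwu, mul_apply, Finset.sum_smul, Finset.smul_sum, smul_smul]
      exact Finset.sum_comm
  rw [hw, Finset.sum_mul]
  refine (norm_sum_le _ _).trans (Finset.sum_le_sum fun l _ => ?_)
  rw [norm_smul, Real.norm_eq_abs]
  exact mul_le_mul_of_nonneg_left (hu l) (abs_nonneg _)

theorem exists_sum_pow_smul_eq_sum_affine_pow_smul {R E : Type*} [CommSemiring R]
    [AddCommMonoid E] [Module R E] {n : ℕ} (c : Fin n → E) (τ a : R) :
    ∃ b : Fin n → E, ∀ y, ∑ j : Fin n, (τ * y + a) ^ (j : ℕ) • c j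
      = ∑ i : Fin n, y ^ (i : ℕ) • b i := by
  refine ⟨fun i => ∑ j, ((C τ * X + C a) ^ (j : ℕ)).coeff i • c j, fun y => ?_⟩
  have hexpand : ∀ j : Fin n, (τ * y + a) ^ (j : ℕ)
      = ∑ i : Fin n, ((C τ * X + C a) ^ (j : ℕ)).coeff i * y ^ (i : ℕ) := by
    intro j
    have hdeg : ((C τ * X + C a) ^ (j : ℕ)).natDegree < n :=
      (natDegree_pow_le_of_le _ natDegree_linear_le).trans_lt (by simp)
    calc (τ * y + a) ^ (j : ℕ) = ((C τ * X + C a) ^ (j : ℕ)).eval y := by simp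
      _ = _ := eval_eq_sum_range' hdeg y
      _ = _ := (Fin.sum_univ_eq_sum_range (fun i => _ * y ^ i) n).symm
  simp_rw [hexpand, Finset.sum_smul, Finset.smul_sum, smul_smul]
  rw [Finset.sum_comm]
  simp_rw [mul_comm]

section
variable {α E : Type*} [MeasurableSpace α] {μ : Measure α} [NormedAddCommGroup E]

theorem integral_norm_le_sqrt_measureReal_mul_sqrt [IsFiniteMeasure μ] {v : α → E}
    (hv : MemLp v 2 μ) : ∫ x, ‖v x‖ ∂μ ≤ √(μ.real univ) * √(∫ x, ‖v x‖ ^ 2 ∂μ) := by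
  have h := integral_mul_le_Lp_mul_Lq_of_nonneg Real.HolderConjugate.two_two (μ := μ)
    (f := fun _ => (1 : ℝ)) (g := fun x => ‖v x‖) (ae_of_all _ fun _ => zero_le_one)
    (ae_of_all _ fun _ => norm_nonneg _) (by simpa using memLp_const (1 : ℝ))
    (by simpa using hv.norm)
  simpa [Real.sqrt_eq_rpow, ← one_div] using h

theorem sqrt_setIntegral_norm_sq_le_of_norm_le {s : Set α} {f : α → E} {R : ℝ}
    (hs : μ s < ⊤) (hR : 0 ≤ R) (hf : ∀ x ∈ s, ‖f x‖ ≤ R) :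
    √(∫ x in s, ‖f x‖ ^ 2 ∂μ) ≤ √(μ.real s) * R := by
  have h : ∫ x in s, ‖f x‖ ^ 2 ∂μ ≤ R ^ 2 * μ.real s :=
    (Real.le_norm_self _).trans <| norm_setIntegral_le_of_norm_le_const hs fun x hx => by
      simpa using pow_le_pow_left₀ (norm_nonneg _) (hf x hx) 2
  calc √(∫ x in s, ‖f x‖ ^ 2 ∂μ) ≤ √(R ^ 2 * μ.real s) := Real.sqrt_le_sqrt h
    _ = √(μ.real s) * R := by rw [Real.sqrt_mul' _ measureReal_nonneg, Real.sqrt_sq hR, mul_comm]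

end

theorem MeasureTheory.IntegrableOn.continuous_smul_Ioc {E : Type*} [NormedAddCommGroup E]
    [NormedSpace ℝ E] {a b : ℝ} {f : ℝ → E} (hf : IntegrableOn f (Ioc a b)) {g : ℝ → ℝ}
    (hg : Continuous g) : IntegrableOn (fun x => g x • f x) (Ioc a b) :=
  hf.continuousOn_smul_of_subset hg.continuousOn isCompact_Icc measurableSet_Ioc
    Ioc_subset_Icc_self

noncomputable def scaledMonomial (a b : ℝ) (n : ℕ) (x : ℝ) : ℝ := ((x - a) / (b - a)) ^ n

namespace scaledMonomial

variable {a b : ℝ}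

@[fun_prop]
theorem continuous (n : ℕ) : Continuous (scaledMonomial a b n) := by
  unfold scaledMonomial
  fun_prop

theorem pow_add_apply (m n : ℕ) (x : ℝ) :
    scaledMonomial a b m x * scaledMonomial a b n x = scaledMonomial a b (m + n) x :=
  (pow_add _ m n).symm

theorem abs_le_one {x : ℝ} (hx : x ∈ Ioc a b) (n : ℕ) : |scaledMonomial a b n x| ≤ 1 := by
  have hba : 0 < b - a := by linarith [hx.1, hx.2]
  rw [scaledMonomial, abs_pow]
  refine pow_le_one₀ (abs_nonneg _) ?_
  rw [abs_div, abs_of_pos hba, abs_of_pos (sub_pos.2 hx.1), div_le_one hba]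
  linarith [hx.2]

theorem setIntegral (hab : a < b) (n : ℕ) :
    ∫ x in Ioc a b, scaledMonomial a b n x = (b - a) / (n + 1) := by
  have hba : b - a ≠ 0 := (sub_pos.2 hab).ne'
  simp_rw [scaledMonomial, div_pow]
  rw [← intervalIntegral.integral_of_le hab.le, intervalIntegral.integral_div,
    intervalIntegral.integral_comp_sub_right (fun x => x ^ n), integral_pow]
  field_simp
  ring

theorem exists_eq_sum_succ_smul {E : Type*} [AddCommGroup E] [Module ℝ E] (hab : a ≠ b)
    {q : ℕ} {p : ℝ → E}
    (hp : ∃ c : Fin (q + 1) → E, ∀ x, p x = ∑ j : Fin (q + 1), x ^ (j : ℕ) • c j)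
    (hpa : p a = 0) :
    ∃ w : Fin q → E, ∀ x, p x = ∑ k : Fin q, scaledMonomial a b (k + 1) x • w k := by
  obtain ⟨c, hc⟩ := hp
  obtain ⟨w, hw⟩ := exists_sum_pow_smul_eq_sum_affine_pow_smul c (b - a) a
  have hpw : ∀ x, p x = ∑ i : Fin (q + 1), scaledMonomial a b i x • w i := fun x => by
    have hx : (b - a) * ((x - a) / (b - a)) + a = x := by
      field_simp [sub_ne_zero.2 hab.symm]
      ring
    rw [hc, ← hx, hw, hx]
    rfl
  have hw0 : w 0 = 0 := by simpa [Fin.sum_univ_succ, scaledMonomial, hpa] using (hpw a).symm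
  refine ⟨fun k => w k.succ, fun x => ?_⟩
  rw [hpw, Fin.sum_univ_succ, hw0, smul_zero, zero_add]
  rfl

variable {E : Type*} [NormedAddCommGroup E] [NormedSpace ℝ E]

theorem norm_smul_le {x : ℝ} (hx : x ∈ Ioc a b) (n : ℕ) (y : E) :
    ‖scaledMonomial a b n x • y‖ ≤ ‖y‖ := by
  simpa [norm_smul] using mul_le_of_le_one_left (norm_nonneg y) (abs_le_one hx n)

theorem norm_sum_smul_le {ι : Type*} {s : Finset ι} {x : ℝ} (hx : x ∈ Ioc a b) (m : ι → ℕ)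
    (w : ι → E) : ‖∑ i ∈ s, scaledMonomial a b (m i) x • w i‖ ≤ ∑ i ∈ s, ‖w i‖ :=
  (norm_sum_le _ _).trans <| Finset.sum_le_sum fun i _ => norm_smul_le hx (m i) (w i)

theorem setIntegral_smul (f : ℝ → E) (n : ℕ) :
    ∫ x in Ioc a b, scaledMonomial a b n x • f x
      = ((b - a) ^ n)⁻¹ • ∫ x in Ioc a b, (x - a) ^ n • f x := by
  simp_rw [← integral_smul, smul_smul, scaledMonomial, div_pow, div_eq_inv_mul]

theorem norm_setIntegral_smul_le (hab : a ≤ b) {v : ℝ → E}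
    (hv : MemLp v 2 (volume.restrict (Ioc a b))) (n : ℕ) :
    ‖∫ x in Ioc a b, scaledMonomial a b n x • v x‖
      ≤ √(b - a) * √(∫ x in Ioc a b, ‖v x‖ ^ 2) := by
  have hle : ∀ᵐ x ∂volume.restrict (Ioc a b), ‖scaledMonomial a b n x • v x‖ ≤ ‖v x‖ :=
    (ae_restrict_iff' measurableSet_Ioc).2 <| ae_of_all _ fun x hx => norm_smul_le hx n (v x)
  calc ‖∫ x in Ioc a b, scaledMonomial a b n x • v x‖
      ≤ ∫ x in Ioc a b, ‖scaledMonomial a b n x • v x‖ := norm_integral_le_integral_norm _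
    _ ≤ ∫ x in Ioc a b, ‖v x‖ :=
      integral_mono_of_nonneg (ae_of_all _ fun _ => norm_nonneg _)
        (hv.integrable one_le_two).norm hle
    _ ≤ √(b - a) * √(∫ x in Ioc a b, ‖v x‖ ^ 2) := by
      simpa [Real.volume_real_Ioc_of_le hab] using integral_norm_le_sqrt_measureReal_mul_sqrt hv

variable [CompleteSpace E]

theorem setIntegral_smul_sum_succ_smul (hab : a < b) {q : ℕ} (w : Fin q → E) (l : Fin q) :
    ∫ x in Ioc a b, scaledMonomial a b l x • ∑ k : Fin q, scaledMonomial a b (k + 1) x • w k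
      = (b - a) • ∑ k, shiftedHilbertMatrix q l k • w k := by
  simp_rw [Finset.smul_sum, smul_smul, pow_add_apply]
  rw [integral_finsetSum _ fun k _ => Continuous.integrableOn_Ioc (by fun_prop)]
  refine Finset.sum_congr rfl fun k _ => ?_
  rw [integral_smul_const, setIntegral hab, shiftedHilbertMatrix, Matrix.of_apply]
  congr 1
  push_cast
  ring

theorem sum_shiftedHilbertMatrix_smul_eq (hab : a < b) {q : ℕ} {v p : ℝ → E}
    (hv : IntegrableOn v (Ioc a b)) {w : Fin q → E}
    (hw : ∀ x, p x = ∑ k : Fin q, scaledMonomial a b (k + 1) x • w k)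
    (hmom : ∀ l < q, ∫ x in Ioc a b, (x - a) ^ l • (v x - p x) = 0) (l : Fin q) :
    ∑ k, shiftedHilbertMatrix q l k • w k
      = (b - a)⁻¹ • ∫ x in Ioc a b, scaledMonomial a b l x • v x := by
  have hp_cont : Continuous p := by
    rw [funext hw]
    fun_prop
  have h0 := setIntegral_smul (a := a) (b := b) (fun x => v x - p x) l
  simp_rw [hmom l l.2, smul_zero, smul_sub] at h0
  rw [integral_sub (hv.continuous_smul_Ioc (continuous l))
    (hp_cont.integrableOn_Ioc.continuous_smul_Ioc (continuous l)), sub_eq_zero] at h0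
  simp_rw [h0, hw, setIntegral_smul_sum_succ_smul hab, smul_smul,
    inv_mul_cancel₀ (sub_pos.2 hab).ne', one_smul]

end scaledMonomial

theorem sqrt_setIntegral_norm_sq_le_of_moments {E : Type*} [NormedAddCommGroup E]
    [NormedSpace ℝ E] [CompleteSpace E] {q : ℕ} {a b : ℝ} (hab : a < b) {v p : ℝ → E}
    (hv : MemLp v 2 (volume.restrict (Ioc a b)))
    (hp : ∃ c : Fin (q + 1) → E, ∀ x, p x = ∑ j : Fin (q + 1), x ^ (j : ℕ) • c j)
    (hpa : p a = 0) (hmom : ∀ l < q, ∫ x in Ioc a b, (x - a) ^ l • (v x - p x) = 0) :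
    √(∫ x in Ioc a b, ‖p x‖ ^ 2) ≤ stabilityConstant q * √(∫ x in Ioc a b, ‖v x‖ ^ 2) := by
  set S := √(∫ x in Ioc a b, ‖v x‖ ^ 2)
  have hτ : 0 < b - a := sub_pos.2 hab
  obtain ⟨w, hw⟩ := scaledMonomial.exists_eq_sum_succ_smul hab.ne hp hpa
  have hsys := scaledMonomial.sum_shiftedHilbertMatrix_smul_eq hab (hv.integrable one_le_two)
    hw hmom
  have hw_le := Matrix.norm_le_of_sum_smul_eq
    (nonsing_inv_mul _ (isUnit_iff_ne_zero.2 (shiftedHilbertMatrix_det_ne_zero q))) hsys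
    (R := S / √(b - a)) fun l => calc
      ‖(b - a)⁻¹ • ∫ x in Ioc a b, scaledMonomial a b l x • v x‖
          = (b - a)⁻¹ * ‖∫ x in Ioc a b, scaledMonomial a b l x • v x‖ := by
        rw [norm_smul, Real.norm_eq_abs, abs_inv, abs_of_pos hτ]
      _ ≤ (b - a)⁻¹ * (√(b - a) * S) := by
        gcongr
        exact scaledMonomial.norm_setIntegral_smul_le hab.le hv l
      _ = S / √(b - a) := by
        rw [← mul_assoc, inv_mul_eq_div, Real.sqrt_div_self', one_div_mul_eq_div]
  have hp_le : √(∫ x in Ioc a b, ‖p x‖ ^ 2) ≤ √(b - a) * ∑ k, ‖w k‖ := by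
    have h := sqrt_setIntegral_norm_sq_le_of_norm_le (f := p) (measure_Ioc_lt_top (μ := volume))
      (Finset.sum_nonneg fun k _ => norm_nonneg (w k)) fun x hx => by
        rw [hw]
        exact scaledMonomial.norm_sum_smul_le hx (fun k : Fin q => (k : ℕ) + 1) w
    rwa [Real.volume_real_Ioc_of_le hab.le] at h
  calc √(∫ x in Ioc a b, ‖p x‖ ^ 2)
      ≤ √(b - a) * ∑ k, (∑ l, |(shiftedHilbertMatrix q)⁻¹ k l|) * (S / √(b - a)) := by
        refine hp_le.trans ?_
        gcongr with k
        exact hw_le k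
    _ = (∑ k, ∑ l, |(shiftedHilbertMatrix q)⁻¹ k l|) * S := by
        rw [← Finset.sum_mul]
        field_simp
    _ ≤ stabilityConstant q * S := by
        gcongr
        exact (lt_add_one _).le

theorem projection_stability_general (q : ℕ) :
    ∃ C : ℝ, 0 < C ∧
      ∀ (V : Type u) [NormedAddCommGroup V] [InnerProductSpace ℝ V] [CompleteSpace V]
        (H : Type w) [NormedAddCommGroup H] [InnerProductSpace ℝ H] [CompleteSpace H]
        (ι : V →L[ℝ] H), Function.Injective ι →
      ∀ tn tn1 : ℝ, tn < tn1 →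
      ∀ v : ℝ → V, MemLp v 2 (volume.restrict (Set.Ioc tn tn1)) →
      ∀ p : ℝ → V,
        (∃ c : Fin (q + 1) → V, ∀ x : ℝ, p x = ∑ j : Fin (q + 1), x ^ (j : ℕ) • c j) →
        p tn = 0 →
        (∀ l < q, (∫ x in Set.Ioc tn tn1, (x - tn) ^ l • (v x - p x)) = 0) →
        Real.sqrt (∫ x in Set.Ioc tn tn1, ‖p x‖ ^ 2) ≤
            C * Real.sqrt (∫ x in Set.Ioc tn tn1, ‖v x‖ ^ 2) ∧
        Real.sqrt (∫ x in Set.Ioc tn tn1, ‖ι (p x)‖ ^ 2) ≤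
            C * Real.sqrt (∫ x in Set.Ioc tn tn1, ‖ι (v x)‖ ^ 2) := by
  refine ⟨stabilityConstant q, stabilityConstant_pos q, ?_⟩
  intro V _ _ _ H _ _ _ ι _ tn tn1 hlt v hv p hp hp0 hmom
  obtain ⟨c, hc⟩ := hp
  have hp_cont : Continuous p := by
    rw [funext hc]
    fun_prop
  refine ⟨sqrt_setIntegral_norm_sq_le_of_moments hlt hv ⟨c, hc⟩ hp0 hmom,
    sqrt_setIntegral_norm_sq_le_of_moments hlt (ι.comp_memLp' hv)
      ⟨fun j => ι (c j), fun x => by simp [hc]⟩ (by simp [hp0]) fun l hl => ?_⟩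
  have hint : IntegrableOn (fun x => (x - tn) ^ l • (v x - p x)) (Ioc tn tn1) :=
    IntegrableOn.continuous_smul_Ioc ((hv.integrable one_le_two).sub hp_cont.integrableOn_Ioc)
      (by fun_prop)
  simpa [hmom l hl] using ι.integral_comp_comm hint

/-- **Lemma 3.1, estimate (3.2b) (L² stability of the projection `π_n`):** there is a
constant `C_q > 0` depending only on `q` such that `‖π_n v‖_{L²(J_n;U)} ≤ C_q ‖v‖_{L²(J_n;U)}`
for every `v ∈ L²(J_n; V)`, both for `U = V` and for `U = H`. The projection `π_n v` is
represented by any polynomial `p` satisfying its characterizing conditions. -/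
theorem projection_stability (q : ℕ) (hq : 1 ≤ q) :
    ∃ C : ℝ, 0 < C ∧
      ∀ (V : Type u) [NormedAddCommGroup V] [InnerProductSpace ℝ V] [CompleteSpace V]
        (H : Type w) [NormedAddCommGroup H] [InnerProductSpace ℝ H] [CompleteSpace H]
        (ι : V →L[ℝ] H), Function.Injective ι →
      ∀ tn tn1 : ℝ, tn < tn1 →
      ∀ v : ℝ → V, MemLp v 2 (volume.restrict (Set.Ioc tn tn1)) →
      ∀ p : ℝ → V,
        (∃ c : Fin (q + 1) → V, ∀ x : ℝ, p x = ∑ j : Fin (q + 1), x ^ (j : ℕ) • c j) →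
        p tn = 0 →
        (∀ l < q, (∫ x in Set.Ioc tn tn1, (x - tn) ^ l • (v x - p x)) = 0) →
        Real.sqrt (∫ x in Set.Ioc tn tn1, ‖p x‖ ^ 2) ≤
            C * Real.sqrt (∫ x in Set.Ioc tn tn1, ‖v x‖ ^ 2) ∧
        Real.sqrt (∫ x in Set.Ioc tn tn1, ‖ι (p x)‖ ^ 2) ≤
            C * Real.sqrt (∫ x in Set.Ioc tn tn1, ‖ι (v x)‖ ^ 2) :=
  projection_stability_general q
end

section
/- Existence and stability of the modified discrete characteristic function (properties (3.8) in the proof of Lemma 3.1): there exists a constant c'_q > 0 depending only on q such that for every U-valued polynomial ṽ of degree ≤ q with ṽ(t_n) = 0 and every s ∈ J_n, there exists a U-valued polynomial v̂ of degree ≤ q satisfying (i) v̂(t_{n+1}) = ṽ(t_{n+1}); (ii) ∫_{J_n} v̂(t) (t − t_n)^l dt = ∫_{t_n}^{s} ṽ(t) (t − t_n)^l dt (Bochner integrals with values in U) for every l = 0, …, q − 1; and (iii) ‖v̂‖_{L²(J_n;U)} ≤ c'_q ‖ṽ‖_{L²(J_n;U)}. -/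
/-!
After the substitution `x = t_n + τ u` everything happens on `[0, 1]`, where the constants no
longer depend on `τ`. On real polynomials of degree `≤ q` the `q + 1` functionals
`p ↦ p(1)` and `p ↦ ∫₀¹ p uˡ` (`l < q`) are linearly independent: if they all vanish then
`p = (u - 1) R` with `deg R < q`, so `∫₀¹ (1 - u) R² = -∫₀¹ p R = 0` and `R = 0`. Hence they have
a dual basis `φ₀, …, φ_q`, and `v̂ = Σₖ φₖ βₖ` with `β₀ = ṽ(1)`, `β_{l+1} = ∫₀^σ uˡ ṽ` has the
required endpoint value and moments. For stability, the moments `β_{l+1}` are bounded by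
`∫₀¹ ‖ṽ‖`, and so is `ṽ(1) = ∫₀¹ g ṽ`, where `g` is the polynomial with `∫₀¹ g uʲ = 1` for `j ≤ q`
(it exists because the Hilbert matrix is nonsingular); Cauchy–Schwarz turns `∫₀¹ ‖ṽ‖` into the
`L²` norm.
-/

open MeasureTheory Polynomial

universe u

theorem exists_mem_degreeLT_map_eq {K : Type*} [Field K] {n : ℕ}
    (L : K[X] →ₗ[K] Fin n → K) (hL : ∀ p ∈ degreeLT K n, L p = 0 → p = 0) (v : Fin n → K) :
    ∃ p ∈ degreeLT K n, L p = v := by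
  have : FiniteDimensional K (degreeLT K n) := (degreeLTEquiv K n).symm.finiteDimensional
  have hinj : Function.Injective (L ∘ₗ (degreeLT K n).subtype) := by
    rw [← LinearMap.ker_eq_bot, LinearMap.ker_eq_bot']
    exact fun p hp => Subtype.ext (hL p p.2 hp)
  obtain ⟨p, hp⟩ := (LinearMap.injective_iff_surjective_of_finrank_eq_finrank
    (degreeLTEquiv K n).finrank_eq).mp hinj v
  exact ⟨p, p.2, hp⟩

noncomputable def lmoment (l : ℕ) : ℝ[X] →ₗ[ℝ] ℝ where
  toFun p := ∫ u in (0:ℝ)..1, p.eval u * u ^ l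
  map_add' p r := by
    simp only [eval_add, add_mul]
    exact intervalIntegral.integral_add ((by fun_prop : Continuous _).intervalIntegrable _ _)
      ((by fun_prop : Continuous _).intervalIntegrable _ _)
  map_smul' c p := by
    simp only [eval_smul, smul_eq_mul, mul_assoc, intervalIntegral.integral_const_mul,
      RingHom.id_apply]

theorem lmoment_apply (l : ℕ) (p : ℝ[X]) :
    lmoment l p = ∫ u in (0:ℝ)..1, p.eval u * u ^ l := rfl

theorem integral_eval_mul_eval_eq_zero {n : ℕ} {p r : ℝ[X]} (hp : ∀ l < n, lmoment l p = 0)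
    (hr : r ∈ degreeLT ℝ n) : ∫ u in (0:ℝ)..1, p.eval u * r.eval u = 0 := by
  simp_rw [eval_eq_sum_degreeLTEquiv hr, Finset.mul_sum, mul_left_comm (p.eval _)]
  rw [intervalIntegral.integral_finsetSum fun _ _ =>
    (by fun_prop : Continuous _).intervalIntegrable _ _]
  refine Finset.sum_eq_zero fun l _ => ?_
  rw [intervalIntegral.integral_const_mul, ← lmoment_apply, hp l l.2, mul_zero]

theorem eq_zero_of_integral_mul_sq_eq_zero {w : ℝ → ℝ} (hw : Continuous w)
    (hw0 : ∀ u ∈ Set.Ioc (0:ℝ) 1, 0 ≤ w u) (hwpos : ∀ u ∈ Set.Ioo (0:ℝ) 1, 0 < w u) {R : ℝ[X]}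
    (h : ∫ u in (0:ℝ)..1, w u * R.eval u ^ 2 = 0) : R = 0 := by
  by_contra hR
  obtain ⟨c, hc, hcR⟩ : ∃ c ∈ Set.Ioo (0:ℝ) 1, ¬ R.IsRoot c :=
    Set.not_subset.mp fun hsub => hR <| R.eq_zero_of_infinite_isRoot <|
      (Set.Ioo_infinite zero_lt_one).mono hsub
  refine h.not_gt (intervalIntegral.integral_pos zero_lt_one (by fun_prop)
    (fun u hu => mul_nonneg (hw0 u hu) (sq_nonneg _))
    ⟨c, Set.Ioo_subset_Icc_self hc, mul_pos (hwpos c hc) (sq_pos_of_ne_zero hcR)⟩)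

noncomputable def lmoments (n : ℕ) : ℝ[X] →ₗ[ℝ] Fin n → ℝ :=
  LinearMap.pi fun l => lmoment l

noncomputable def levalOneMoments (q : ℕ) : ℝ[X] →ₗ[ℝ] Fin (q + 1) → ℝ :=
  LinearMap.pi (Fin.cons (leval 1) fun l : Fin q => lmoment l)

theorem eq_zero_of_lmoments_eq_zero {n : ℕ} {p : ℝ[X]} (hp : p ∈ degreeLT ℝ n)
    (h : lmoments n p = 0) : p = 0 := by
  have hmom : ∀ l < n, lmoment l p = 0 := fun l hl => congr_fun h ⟨l, hl⟩
  refine eq_zero_of_integral_mul_sq_eq_zero (w := 1) continuous_const (fun _ _ => zero_le_one)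
    (fun _ _ => zero_lt_one) ?_
  simpa [sq] using integral_eval_mul_eval_eq_zero hmom hp

theorem eq_zero_of_levalOneMoments_eq_zero {q : ℕ} {p : ℝ[X]} (hp : p ∈ degreeLT ℝ (q + 1))
    (h : levalOneMoments q p = 0) : p = 0 := by
  have hmom : ∀ l < q, lmoment l p = 0 := fun l hl => congr_fun h (Fin.succ ⟨l, hl⟩)
  obtain ⟨R, rfl⟩ := dvd_iff_isRoot.mpr (congr_fun h 0)
  by_contra hp0
  have hR0 : R ≠ 0 := right_ne_zero_of_mul hp0
  have hR : R ∈ degreeLT ℝ q := by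
    rw [mem_degreeLT, ← natDegree_lt_iff_degree_lt hR0]
    rw [mem_degreeLT, ← natDegree_lt_iff_degree_lt hp0, natDegree_mul (X_sub_C_ne_zero 1) hR0,
      natDegree_X_sub_C] at hp
    omega
  refine hR0 (eq_zero_of_integral_mul_sq_eq_zero (w := fun u => 1 - u) (by fun_prop)
    (fun u hu => by linarith [hu.2]) (fun u hu => by linarith [hu.2]) ?_)
  have := integral_eval_mul_eval_eq_zero hmom hR
  simp only [eval_mul, eval_sub, eval_X, eval_C] at this
  rw [← neg_eq_zero, ← intervalIntegral.integral_neg, ← this]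
  congr 1 with u
  ring

theorem exists_integral_eval_mul_pow_eq_one (n : ℕ) :
    ∃ g : ℝ[X], ∀ j < n, ∫ u in (0:ℝ)..1, g.eval u * u ^ j = 1 := by
  obtain ⟨g, -, hg⟩ :=
    exists_mem_degreeLT_map_eq (lmoments n) (fun _ => eq_zero_of_lmoments_eq_zero) 1
  exact ⟨g, fun j hj => congr_fun hg ⟨j, hj⟩⟩

theorem exists_levalOneMoments_eq_single (q : ℕ) :
    ∃ φ : Fin (q + 1) → ℝ[X], (∀ k, φ k ∈ degreeLT ℝ (q + 1)) ∧
      ∀ k, levalOneMoments q (φ k) = Pi.single k 1 := by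
  choose φ hφ using fun k : Fin (q + 1) =>
    exists_mem_degreeLT_map_eq (levalOneMoments q) (fun _ => eq_zero_of_levalOneMoments_eq_zero)
      (Pi.single k 1)
  exact ⟨φ, fun k => (hφ k).1, fun k => (hφ k).2⟩

section VectorValued

variable {U : Type*} [NormedAddCommGroup U] [NormedSpace ℝ U]

def IsPolyOfDegLE (q : ℕ) (f : ℝ → U) : Prop :=
  ∃ c : Fin (q + 1) → U, ∀ x, f x = ∑ j : Fin (q + 1), x ^ (j : ℕ) • c j

theorem isPolyOfDegLE_sum_eval_smul {q : ℕ} {ι : Type*} [Fintype ι] (p : ι → ℝ[X])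
    (hp : ∀ k, p k ∈ degreeLT ℝ (q + 1)) (c : ι → U) :
    IsPolyOfDegLE q fun x => ∑ k, (p k).eval x • c k := by
  refine ⟨fun j => ∑ k, degreeLTEquiv ℝ _ ⟨p k, hp k⟩ j • c k, fun x => ?_⟩
  simp_rw [eval_eq_sum_degreeLTEquiv (hp _), Finset.sum_smul, Finset.smul_sum, smul_smul,
    mul_comm]
  exact Finset.sum_comm

theorem IsPolyOfDegLE.comp_add_mul {q : ℕ} {f : ℝ → U} (hf : IsPolyOfDegLE q f) (a b : ℝ) :
    IsPolyOfDegLE q fun x => f (a + b * x) := by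
  obtain ⟨c, hc⟩ := hf
  have hdeg : ∀ j : Fin (q + 1), (C b * X + C a) ^ (j : ℕ) ∈ degreeLT ℝ (q + 1) := by
    intro j
    have := (natDegree_pow_le (p := C b * X + C a) (n := j)).trans
      (Nat.mul_le_mul_left (j : ℕ) natDegree_linear_le)
    exact mem_degreeLT.mpr <| degree_le_natDegree.trans_lt <| by exact_mod_cast (by omega)
  simpa [hc, add_comm] using isPolyOfDegLE_sum_eval_smul _ hdeg c

theorem IsPolyOfDegLE.continuous {q : ℕ} {f : ℝ → U} (hf : IsPolyOfDegLE q f) :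
    Continuous f := by
  obtain ⟨c, hc⟩ := hf
  rw [funext hc]
  fun_prop

theorem intervalIntegral.integral_smul_sum_smul [CompleteSpace U] {ι : Type*} [Fintype ι]
    {h : ℝ → ℝ} (hh : Continuous h) {p : ι → ℝ → ℝ} (hp : ∀ k, Continuous (p k)) (c : ι → U)
    (a b : ℝ) :
    ∫ u in a..b, h u • ∑ k, p k u • c k = ∑ k, (∫ u in a..b, h u * p k u) • c k := by
  simp_rw [Finset.smul_sum, smul_smul]
  rw [intervalIntegral.integral_finsetSum (f := fun k u => (h u * p k u) • c k) fun k _ =>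
    ((hh.mul (hp k)).smul continuous_const).intervalIntegrable a b]
  simp_rw [intervalIntegral.integral_smul_const]

theorem norm_integral_smul_le {h : ℝ → ℝ} {w : ℝ → U} (hw : Continuous w)
    {M σ : ℝ} (hM : ∀ u ∈ Set.Icc (0:ℝ) 1, |h u| ≤ M) (hσ : σ ∈ Set.Icc (0:ℝ) 1) :
    ‖∫ u in (0:ℝ)..σ, h u • w u‖ ≤ M * ∫ u in (0:ℝ)..1, ‖w u‖ := by
  have hM0 : 0 ≤ M := (abs_nonneg _).trans (hM 0 (by simp))
  calc ‖∫ u in (0:ℝ)..σ, h u • w u‖ ≤ ∫ u in (0:ℝ)..σ, M * ‖w u‖ := by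
        refine intervalIntegral.norm_integral_le_of_norm_le hσ.1
          (Filter.Eventually.of_forall fun u hu => ?_)
          ((by fun_prop : Continuous _).intervalIntegrable _ _)
        rw [norm_smul, Real.norm_eq_abs]
        exact mul_le_mul_of_nonneg_right (hM u ⟨hu.1.le, hu.2.trans hσ.2⟩) (norm_nonneg _)
    _ ≤ ∫ u in (0:ℝ)..1, M * ‖w u‖ :=
        intervalIntegral.integral_mono_interval le_rfl hσ.1 hσ.2
          (Filter.Eventually.of_forall fun u => by positivity)
          ((by fun_prop : Continuous _).intervalIntegrable _ _)
    _ = M * ∫ u in (0:ℝ)..1, ‖w u‖ := intervalIntegral.integral_const_mul _ _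

theorem IsPolyOfDegLE.integral_smul_eq_eval_one [CompleteSpace U] {q : ℕ} {g : ℝ[X]}
    (hg : ∀ j < q + 1, ∫ u in (0:ℝ)..1, g.eval u * u ^ j = 1) {w : ℝ → U}
    (hw : IsPolyOfDegLE q w) : ∫ u in (0:ℝ)..1, g.eval u • w u = w 1 := by
  obtain ⟨c, hc⟩ := hw
  simp_rw [hc]
  rw [intervalIntegral.integral_smul_sum_smul g.continuous (fun _ => by fun_prop)]
  simp [hg _ (Fin.is_lt _)]

theorem eval_one_and_moments_of_sum_eval_smul [CompleteSpace U] {q : ℕ} {φ : Fin (q + 1) → ℝ[X]}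
    (hφ : ∀ k, levalOneMoments q (φ k) = Pi.single k 1) (β : Fin (q + 1) → U) :
    ∑ k, (φ k).eval 1 • β k = β 0 ∧
      ∀ l : Fin q, ∫ u in (0:ℝ)..1, u ^ (l : ℕ) • ∑ k, (φ k).eval u • β k = β l.succ := by
  constructor
  · have h0 : ∀ k, (φ k).eval 1 = levalOneMoments q (φ k) 0 := fun k => rfl
    simp [h0, hφ, Pi.single_apply]
  · intro l
    have hl : ∀ k, ∫ u in (0:ℝ)..1, u ^ (l : ℕ) * (φ k).eval u =
        levalOneMoments q (φ k) l.succ := fun k => by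
      simp [levalOneMoments, lmoment_apply, mul_comm]
    rw [intervalIntegral.integral_smul_sum_smul (by fun_prop) (fun _ => by fun_prop)]
    simp [hl, hφ, Pi.single_apply]

noncomputable def evalOneMoments (q : ℕ) (w : ℝ → U) (σ : ℝ) : Fin (q + 1) → U :=
  Fin.cons (w 1) fun l : Fin q => ∫ u in (0:ℝ)..σ, u ^ (l : ℕ) • w u

theorem norm_evalOneMoments_le [CompleteSpace U] {q : ℕ} {g : ℝ[X]}
    (hg : ∀ j < q + 1, ∫ u in (0:ℝ)..1, g.eval u * u ^ j = 1) {M : ℝ}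
    (hM : ∀ u ∈ Set.Icc (0:ℝ) 1, |g.eval u| ≤ M) {w : ℝ → U} (hw : IsPolyOfDegLE q w) {σ : ℝ}
    (hσ : σ ∈ Set.Icc (0:ℝ) 1) (k : Fin (q + 1)) :
    ‖evalOneMoments q w σ k‖ ≤ (M + 1) * ∫ u in (0:ℝ)..1, ‖w u‖ := by
  have hw1 : 0 ≤ ∫ u in (0:ℝ)..1, ‖w u‖ :=
    intervalIntegral.integral_nonneg zero_le_one fun _ _ => norm_nonneg _
  induction k using Fin.cases with
  | zero =>
    rw [evalOneMoments, Fin.cons_zero, ← hw.integral_smul_eq_eval_one hg]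
    refine (norm_integral_smul_le hw.continuous hM ⟨zero_le_one, le_rfl⟩).trans ?_
    nlinarith
  | succ l =>
    rw [evalOneMoments, Fin.cons_succ]
    refine (norm_integral_smul_le hw.continuous (M := 1) (fun u hu => ?_) hσ).trans ?_
    · rw [abs_pow, abs_of_nonneg hu.1]
      exact pow_le_one₀ hu.1 hu.2
    · have := (abs_nonneg _).trans (hM 0 ⟨le_rfl, zero_le_one⟩)
      nlinarith

theorem norm_sum_smul_le {ι : Type*} [Fintype ι] {p : ι → ℝ} {β : ι → U} {M B : ℝ}
    (hp : ∑ k, |p k| ≤ M) (hβ : ∀ k, ‖β k‖ ≤ B) (hB : 0 ≤ B) : ‖∑ k, p k • β k‖ ≤ M * B := by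
  calc ‖∑ k, p k • β k‖ ≤ ∑ k, |p k| * B := by
        refine (norm_sum_le _ _).trans (Finset.sum_le_sum fun k _ => ?_)
        rw [norm_smul, Real.norm_eq_abs]
        exact mul_le_mul_of_nonneg_left (hβ k) (abs_nonneg _)
    _ = (∑ k, |p k|) * B := Finset.sum_mul _ _ _ |>.symm
    _ ≤ M * B := mul_le_mul_of_nonneg_right hp hB

theorem intervalIntegral.integral_eq_smul_integral_comp_add_mul {τ : ℝ} (hτ : τ ≠ 0)
    (F : ℝ → U) (a t : ℝ) :
    ∫ x in a..t, F x = τ • ∫ u in (0:ℝ)..(t - a) / τ, F (a + τ * u) := by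
  rw [intervalIntegral.integral_comp_add_mul _ hτ, smul_inv_smul₀ hτ, mul_zero, add_zero,
    mul_div_cancel₀ _ hτ, add_sub_cancel]

theorem intervalIntegral.integral_sub_pow_smul_eq {τ : ℝ} (hτ : τ ≠ 0) (f : ℝ → U) (a t : ℝ)
    (l : ℕ) :
    ∫ x in a..t, (x - a) ^ l • f x =
      τ ^ (l + 1) • ∫ u in (0:ℝ)..(t - a) / τ, u ^ l • f (a + τ * u) := by
  simp_rw [intervalIntegral.integral_eq_smul_integral_comp_add_mul hτ _ a t, add_sub_cancel_left,
    mul_pow, mul_smul, intervalIntegral.integral_smul, smul_smul, pow_succ']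

end VectorValued

theorem sq_integral_le_integral_sq {f : ℝ → ℝ} (hf : Continuous f) :
    (∫ u in (0:ℝ)..1, f u) ^ 2 ≤ ∫ u in (0:ℝ)..1, f u ^ 2 := by
  set m := ∫ u in (0:ℝ)..1, f u
  have hvar : 0 ≤ ∫ u in (0:ℝ)..1, (f u - m) ^ 2 :=
    intervalIntegral.integral_nonneg zero_le_one fun _ _ => sq_nonneg _
  have hexp : ∫ u in (0:ℝ)..1, (f u - m) ^ 2 = (∫ u in (0:ℝ)..1, f u ^ 2) - m ^ 2 := by
    simp_rw [sub_sq]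
    rw [intervalIntegral.integral_add, intervalIntegral.integral_sub]
    · simp [mul_assoc, intervalIntegral.integral_const_mul, m]
      ring
    all_goals exact (by fun_prop : Continuous _).intervalIntegrable _ _
  linarith

theorem integral_norm_sq_le_of_norm_le {U : Type*} [NormedAddCommGroup U] {f : ℝ → U}
    (hf : Continuous f) {B : ℝ} (hB : ∀ u ∈ Set.Icc (0:ℝ) 1, ‖f u‖ ≤ B) : ∫ u in (0:ℝ)..1, ‖f u‖ ^ 2 ≤ B ^ 2 := by
  calc ∫ u in (0:ℝ)..1, ‖f u‖ ^ 2 ≤ ∫ u in (0:ℝ)..1, B ^ 2 :=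
        intervalIntegral.integral_mono_on zero_le_one
          ((by fun_prop : Continuous _).intervalIntegrable _ _)
          intervalIntegrable_const fun u hu => pow_le_pow_left₀ (norm_nonneg _) (hB u hu) 2
    _ = B ^ 2 := by simp

theorem exists_modification_on_unit_interval (q : ℕ) :
    ∃ C > 0, ∀ (U : Type u) [NormedAddCommGroup U] [NormedSpace ℝ U] [CompleteSpace U]
      (w : ℝ → U), IsPolyOfDegLE q w → ∀ σ ∈ Set.Icc (0:ℝ) 1,
      ∃ ŵ : ℝ → U, IsPolyOfDegLE q ŵ ∧ ŵ 1 = w 1 ∧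
        (∀ l < q, ∫ u in (0:ℝ)..1, u ^ l • ŵ u = ∫ u in (0:ℝ)..σ, u ^ l • w u) ∧
        ∫ u in (0:ℝ)..1, ‖ŵ u‖ ^ 2 ≤ C ^ 2 * ∫ u in (0:ℝ)..1, ‖w u‖ ^ 2 := by
  obtain ⟨g, hg⟩ := exists_integral_eval_mul_pow_eq_one (q + 1)
  obtain ⟨φ, hφdeg, hφ⟩ := exists_levalOneMoments_eq_single q
  obtain ⟨Mg, hMg⟩ := isCompact_Icc.exists_bound_of_continuousOn
    (g.continuous.continuousOn (s := Set.Icc (0:ℝ) 1))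
  obtain ⟨Mφ, hMφ⟩ := isCompact_Icc.exists_bound_of_continuousOn
    (f := fun u => ∑ k, |(φ k).eval u|) (s := Set.Icc (0:ℝ) 1) (by fun_prop)
  have hMg0 : 0 ≤ Mg := (norm_nonneg _).trans (hMg 0 ⟨le_rfl, zero_le_one⟩)
  have hMφ0 : 0 ≤ Mφ := (norm_nonneg _).trans (hMφ 0 ⟨le_rfl, zero_le_one⟩)
  refine ⟨(Mφ + 1) * (Mg + 1), by positivity, fun U _ _ _ w hw σ hσ => ?_⟩
  set N := √(∫ u in (0:ℝ)..1, ‖w u‖ ^ 2)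
  have hL1 : ∫ u in (0:ℝ)..1, ‖w u‖ ≤ N :=
    (le_abs_self _).trans (Real.abs_le_sqrt (sq_integral_le_integral_sq hw.continuous.norm))
  set β := evalOneMoments q w σ
  have hβ k : ‖β k‖ ≤ (Mg + 1) * N :=
    (norm_evalOneMoments_le hg (fun u hu => by simpa using hMg u hu) hw hσ k).trans
      (by gcongr)
  obtain ⟨hend, hmom⟩ := eval_one_and_moments_of_sum_eval_smul hφ β
  refine ⟨fun u => ∑ k, (φ k).eval u • β k, isPolyOfDegLE_sum_eval_smul φ hφdeg β, hend,
    fun l hl => hmom ⟨l, hl⟩, ?_⟩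
  calc ∫ u in (0:ℝ)..1, ‖∑ k, (φ k).eval u • β k‖ ^ 2 ≤ ((Mφ + 1) * ((Mg + 1) * N)) ^ 2 := by
        refine integral_norm_sq_le_of_norm_le (by fun_prop) fun u hu =>
          norm_sum_smul_le ?_ hβ (by positivity)
        have := hMφ u hu
        rw [Real.norm_eq_abs] at this
        linarith [le_abs_self (∑ k, |(φ k).eval u|)]
    _ = ((Mφ + 1) * (Mg + 1)) ^ 2 * ∫ u in (0:ℝ)..1, ‖w u‖ ^ 2 := by
        rw [mul_pow, mul_pow, Real.sq_sqrt (intervalIntegral.integral_nonneg zero_le_one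
          fun _ _ => sq_nonneg _)]
        ring

theorem discrete_characteristic_function_general (q : ℕ) :
    ∃ c : ℝ, 0 < c ∧
      ∀ (U : Type u) [NormedAddCommGroup U] [InnerProductSpace ℝ U] [CompleteSpace U],
      ∀ tn tn1 : ℝ, tn < tn1 →
      ∀ (co : Fin (q + 1) → U) (vt : ℝ → U),
        (∀ x : ℝ, vt x = ∑ j : Fin (q + 1), x ^ (j : ℕ) • co j) →
        vt tn = 0 →
      ∀ s ∈ Set.Ioc tn tn1,
        ∃ (d : Fin (q + 1) → U) (vh : ℝ → U),
          (∀ x : ℝ, vh x = ∑ j : Fin (q + 1), x ^ (j : ℕ) • d j) ∧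
          vh tn1 = vt tn1 ∧
          (∀ l < q, (∫ x in Set.Ioc tn tn1, (x - tn) ^ l • vh x)
            = ∫ x in Set.Ioc tn s, (x - tn) ^ l • vt x) ∧
          Real.sqrt (∫ x in Set.Ioc tn tn1, ‖vh x‖ ^ 2) ≤
            c * Real.sqrt (∫ x in Set.Ioc tn tn1, ‖vt x‖ ^ 2) := by
  obtain ⟨C, hC, href⟩ := exists_modification_on_unit_interval.{u} q
  refine ⟨C, hC, fun U _ _ _ tn tn1 htn co vt hvt _ s hs => ?_⟩
  set τ := tn1 - tn
  have hτ : 0 < τ := sub_pos.mpr htn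
  obtain ⟨ŵ, hŵ, hend, hmom, hL2⟩ := href U (fun u => vt (tn + τ * u))
    (IsPolyOfDegLE.comp_add_mul ⟨co, hvt⟩ tn τ) ((s - tn) / τ)
    ⟨div_nonneg (sub_nonneg.mpr hs.1.le) hτ.le, div_le_one_of_le₀ (by linarith [hs.2]) hτ.le⟩
  obtain ⟨d, hd⟩ : IsPolyOfDegLE q fun x => ŵ ((x - tn) / τ) := by
    convert hŵ.comp_add_mul (-(tn / τ)) τ⁻¹ using 3
    ring
  have hcomp (u : ℝ) : (tn + τ * u - tn) / τ = u := by field_simp; ring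
  have hone : (tn1 - tn) / τ = 1 := div_self hτ.ne'
  refine ⟨d, fun x => ŵ ((x - tn) / τ), hd, ?_, fun l _ => ?_, ?_⟩
  · simpa [hone, τ] using hend
  · rw [← intervalIntegral.integral_of_le htn.le, ← intervalIntegral.integral_of_le hs.1.le,
      intervalIntegral.integral_sub_pow_smul_eq hτ.ne',
      intervalIntegral.integral_sub_pow_smul_eq hτ.ne']
    simp only [hcomp, hone, hmom l ‹_›]
  · simp only [← intervalIntegral.integral_of_le htn.le]
    rw [intervalIntegral.integral_eq_smul_integral_comp_add_mul hτ.ne',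
      intervalIntegral.integral_eq_smul_integral_comp_add_mul hτ.ne' (fun x => ‖vt x‖ ^ 2)]
    simp only [hcomp, hone, smul_eq_mul]
    calc _ ≤ √(C ^ 2 * (τ * ∫ u in (0:ℝ)..1, ‖vt (tn + τ * u)‖ ^ 2)) :=
          Real.sqrt_le_sqrt (by linarith [mul_le_mul_of_nonneg_left hL2 hτ.le])
      _ = _ := by rw [Real.sqrt_mul (sq_nonneg C), Real.sqrt_sq hC.le]

/-- **Properties (3.8) (existence and stability of the modified discrete characteristic
function):** there is `c'_q > 0` depending only on `q` such that for every `U`-valued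
polynomial `ṽ` of degree ≤ `q` vanishing at `t_n` and every `s ∈ J_n`, there is a `U`-valued
polynomial `v̂` of degree ≤ `q` with `v̂(t_{n+1}) = ṽ(t_{n+1})`, with prescribed moments
`∫_{J_n} v̂ (t-t_n)^l dt = ∫_{t_n}^s ṽ (t-t_n)^l dt` for `l < q`, and satisfying
`‖v̂‖_{L²(J_n;U)} ≤ c'_q ‖ṽ‖_{L²(J_n;U)}`. -/
theorem discrete_characteristic_function (q : ℕ) (hq : 1 ≤ q) :
    ∃ c : ℝ, 0 < c ∧
      ∀ (U : Type u) [NormedAddCommGroup U] [InnerProductSpace ℝ U] [CompleteSpace U],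
      ∀ tn tn1 : ℝ, tn < tn1 →
      ∀ (co : Fin (q + 1) → U) (vt : ℝ → U),
        (∀ x : ℝ, vt x = ∑ j : Fin (q + 1), x ^ (j : ℕ) • co j) →
        vt tn = 0 →
      ∀ s ∈ Set.Ioc tn tn1,
        ∃ (d : Fin (q + 1) → U) (vh : ℝ → U),
          (∀ x : ℝ, vh x = ∑ j : Fin (q + 1), x ^ (j : ℕ) • d j) ∧
          vh tn1 = vt tn1 ∧
          (∀ l < q, (∫ x in Set.Ioc tn tn1, (x - tn) ^ l • vh x)
            = ∫ x in Set.Ioc tn s, (x - tn) ^ l • vt x) ∧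
          Real.sqrt (∫ x in Set.Ioc tn tn1, ‖vh x‖ ^ 2) ≤
            c * Real.sqrt (∫ x in Set.Ioc tn tn1, ‖vt x‖ ^ 2) :=
  discrete_characteristic_function_general q
end
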